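/- Let K > 0 and let f : ℝ → ℝ satisfy condition (2.1) and be twice differentiable on ℝ∖{0}. Let D > 0 and let 0 < x_0 < x_1 < ∞ be such that for i = 0, 1 one has (M f)''(x_i) = 0 and −a'(x_i) ≤ D. Then |(M f)'(x_0) − (M f)'(x_1)| ≤ 2(2+D)² ( |f'(x_1) − f'(x_0)| + |f'(a(x_1)) − f'(a(x_0))| ). -/

import Mathlib

open MeasureTheory Set Filter
open scoped ENNReal Topology

/-- Uncentered Hardy–Littlewood maximal function (without absolute values):
`M f x = sup_{a < x < b} (1/(b-a)) ∫_a^b f`. -/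
noncomputable def maxFn (f : ℝ → ℝ) (x : ℝ) : ℝ :=
  sSup {z : ℝ | ∃ a b : ℝ, a < x ∧ x < b ∧ z = (b - a)⁻¹ * ∫ y in a..b, f y}

/-- The variation of `g` on an open set `U`:
`var_U(g) = sup { -∫_U g φ' : φ ∈ C¹_c(U), |φ| ≤ 1 }`, valued in `ℝ≥0∞`. -/
noncomputable def evar (U : Set ℝ) (g : ℝ → ℝ) : ℝ≥0∞ :=
  ⨆ (φ : ℝ → ℝ) (_ : ContDiff ℝ 1 φ ∧ HasCompactSupport φ ∧ tsupport φ ⊆ U ∧ ∀ x, |φ x| ≤ 1),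
    ENNReal.ofReal (-∫ x in U, g x * deriv φ x)

/-- `g` is the weak derivative of `f` on `ℝ`. -/
def HasWeakDeriv (f g : ℝ → ℝ) : Prop :=
  LocallyIntegrable f volume ∧ LocallyIntegrable g volume ∧
    ∀ φ : ℝ → ℝ, ContDiff ℝ 1 φ → HasCompactSupport φ →
      ∫ x, f x * deriv φ x = -∫ x, g x * φ x

/-- Condition (2.1): for all `x < y` with `0 ∉ (x,y)`,
`1/K ≤ −sign(x+y)·(f(y)−f(x))/(y−x) ≤ K`. -/
def Cond21 (K : ℝ) (f : ℝ → ℝ) : Prop :=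
  ∀ x y : ℝ, x < y → (0:ℝ) ∉ Set.Ioo x y →
    1 / K ≤ -Real.sign (x + y) * ((f y - f x) / (y - x)) ∧
      -Real.sign (x + y) * ((f y - f x) / (y - x)) ≤ K

/-- `a` is the map assigning to each `x ≠ 0` the (unique) point `a x` on the other side of
the origin such that `M f x` equals the average of `f` over the interval between `a x` and `x`. -/
def IsArgOf (f : ℝ → ℝ) (a : ℝ → ℝ) : Prop :=
  ∀ x : ℝ, x ≠ 0 →
    ((0 < x → a x < 0) ∧ (x < 0 → 0 < a x)) ∧
    maxFn f x = (x - a x)⁻¹ * ∫ t in (a x)..x, f t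

/-- `f` is twice differentiable on `ℝ \ {0}`. -/
def TwiceDiffOffZero (f : ℝ → ℝ) : Prop :=
  ∀ x : ℝ, x ≠ 0 → DifferentiableAt ℝ f x ∧ DifferentiableAt ℝ (deriv f) x

section HLAux

variable {K : ℝ} {f : ℝ → ℝ}

lemma hl_slope_neg (hK : 0 < K) (hf : Cond21 K f) {x y : ℝ} (hxy : x < y) (hy : y ≤ 0) :
    (y - x) / K ≤ f y - f x ∧ f y - f x ≤ K * (y - x) := by
  have h0 : (0:ℝ) ∉ Set.Ioo x y := fun h => absurd h.2 (not_lt.2 hy)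
  have hs : Real.sign (x + y) = -1 := Real.sign_of_neg (by nlinarith [hxy])
  obtain ⟨h1, h2⟩ := hf x y hxy h0
  rw [hs] at h1 h2
  have h1' : 1 / K ≤ (f y - f x) / (y - x) := by linarith
  have h2' : (f y - f x) / (y - x) ≤ K := by linarith
  have hyx : 0 < y - x := by linarith
  rw [div_le_div_iff₀ hK hyx] at h1'
  rw [div_le_iff₀ hyx] at h2'
  exact ⟨by rw [div_le_iff₀ hK]; linarith, by linarith⟩

lemma hl_slope_pos (hK : 0 < K) (hf : Cond21 K f) {x y : ℝ} (hx : 0 ≤ x) (hxy : x < y) :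
    f y - f x ≤ -((y - x) / K) ∧ -(K * (y - x)) ≤ f y - f x := by
  have h0 : (0:ℝ) ∉ Set.Ioo x y := fun h => absurd h.1 (not_lt.2 hx)
  have hs : Real.sign (x + y) = 1 := Real.sign_of_pos (by nlinarith [hxy])
  obtain ⟨h1, h2⟩ := hf x y hxy h0
  rw [hs] at h1 h2
  have h1' : 1 / K ≤ -((f y - f x) / (y - x)) := by linarith
  have h2' : -((f y - f x) / (y - x)) ≤ K := by linarith
  have hyx : 0 < y - x := by linarith
  rw [← neg_div] at h1' h2'
  rw [div_le_div_iff₀ hK hyx] at h1'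
  rw [div_le_iff₀ hyx] at h2'
  constructor
  · have : (y - x) / K ≤ -(f y - f x) := by rw [div_le_iff₀ hK]; linarith
    linarith
  · linarith

lemma hl_lip_aux (hK : 0 < K) (hf : Cond21 K f) {x y : ℝ} (hxy : x < y) :
    |f y - f x| ≤ K * (y - x) := by
  have hyx : 0 < y - x := by linarith
  rcases le_or_gt y 0 with hy | hy0
  · obtain ⟨h1, h2⟩ := hl_slope_neg hK hf hxy hy
    have hdiv : 0 < (y - x) / K := div_pos hyx hK
    exact abs_le.2 ⟨by linarith, h2⟩
  rcases le_or_gt 0 x with hx | hx0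
  · obtain ⟨h1, h2⟩ := hl_slope_pos hK hf hx hxy
    have hdiv : 0 < (y - x) / K := div_pos hyx hK
    exact abs_le.2 ⟨h2, by linarith⟩
  · obtain ⟨h1, h2⟩ := hl_slope_neg hK hf hx0 le_rfl
    obtain ⟨h3, h4⟩ := hl_slope_pos hK hf le_rfl hy0
    have hd1 : 0 < (0 - x) / K := div_pos (by linarith) hK
    have hd2 : 0 < (y - 0) / K := div_pos (by linarith) hK
    have b1 : |f 0 - f x| ≤ K * (0 - x) := abs_le.2 ⟨by linarith, h2⟩
    have b2 : |f y - f 0| ≤ K * (y - 0) := abs_le.2 ⟨by linarith, by linarith⟩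
    calc |f y - f x| = |(f y - f 0) + (f 0 - f x)| := by ring_nf
      _ ≤ |f y - f 0| + |f 0 - f x| := abs_add_le _ _
      _ ≤ K * (y - 0) + K * (0 - x) := add_le_add b2 b1
      _ = K * (y - x) := by ring

lemma hl_cont (hK : 0 < K) (hf : Cond21 K f) : Continuous f := by
  have : LipschitzWith (Real.toNNReal K) f := by
    apply LipschitzWith.of_dist_le_mul
    intro x y
    rw [Real.dist_eq, Real.dist_eq, Real.coe_toNNReal K hK.le]
    rcases lt_trichotomy x y with h | rfl | h
    · rw [abs_sub_comm (f x), abs_sub_comm x, abs_of_pos (by linarith : (0:ℝ) < y - x)]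
      exact hl_lip_aux hK hf h
    · simp
    · rw [abs_of_pos (by linarith : (0:ℝ) < x - y)]
      exact hl_lip_aux hK hf h
  exact this.continuous

lemma hl_le_f0 (hK : 0 < K) (hf : Cond21 K f) (t : ℝ) : f t ≤ f 0 := by
  rcases lt_trichotomy t 0 with h | rfl | h
  · have h1 := (hl_slope_neg hK hf h le_rfl).1
    have hd : 0 < (0 - t) / K := div_pos (by linarith) hK
    linarith
  · exact le_rfl
  · have h1 := (hl_slope_pos hK hf le_rfl h).1
    have hd : 0 < (t - 0) / K := div_pos (by linarith) hK
    linarith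

lemma hl_deriv_neg (hK : 0 < K) (hf : Cond21 K f) {u : ℝ} (hu : u < 0)
    (hd : DifferentiableAt ℝ f u) : 1 / K ≤ deriv f u ∧ deriv f u ≤ K := by
  have hT : Tendsto (slope f u) (𝓝[>] u) (𝓝 (deriv f u)) :=
    (hasDerivAt_iff_tendsto_slope.1 hd.hasDerivAt).mono_left
      (nhdsWithin_mono u (fun y hy => ne_of_gt hy))
  have hev : ∀ᶠ y in 𝓝[>] u, (1/K ≤ slope f u y ∧ slope f u y ≤ K) := by
    filter_upwards [Ioo_mem_nhdsGT_of_mem (Set.left_mem_Ico.2 hu)] with y hy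
    obtain ⟨hy1, hy2⟩ := hy
    obtain ⟨h1, h2⟩ := hl_slope_neg hK hf hy1 hy2.le
    have hyu : 0 < y - u := by linarith
    rw [slope_def_field]
    constructor
    · rw [div_le_div_iff₀ hK hyu]; rw [div_le_iff₀ hK] at h1; linarith
    · rw [div_le_iff₀ hyu]; linarith
  exact ⟨ge_of_tendsto hT (hev.mono fun y h => h.1),
    le_of_tendsto hT (hev.mono fun y h => h.2)⟩

lemma hl_deriv_pos (hK : 0 < K) (hf : Cond21 K f) {v : ℝ} (hv : 0 < v)
    (hd : DifferentiableAt ℝ f v) : deriv f v ≤ -(1 / K) ∧ -K ≤ deriv f v := by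
  have hT : Tendsto (slope f v) (𝓝[<] v) (𝓝 (deriv f v)) :=
    (hasDerivAt_iff_tendsto_slope.1 hd.hasDerivAt).mono_left
      (nhdsWithin_mono v (fun y hy => ne_of_lt hy))
  have hev : ∀ᶠ y in 𝓝[<] v, (slope f v y ≤ -(1/K) ∧ -K ≤ slope f v y) := by
    filter_upwards [Ioo_mem_nhdsLT_of_mem (Set.right_mem_Ioc.2 hv)] with y hy
    obtain ⟨hy1, hy2⟩ := hy
    obtain ⟨h1, h2⟩ := hl_slope_pos hK hf hy1.le hy2
    have hyv : 0 < v - y := by linarith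
    have hs : slope f v y = (f v - f y) / (v - y) := by
      rw [slope_def_field, div_eq_div_iff (by linarith) (by linarith)]; ring
    rw [hs]
    constructor
    · rw [div_le_iff₀ hyv]
      have he : -(1/K)*(v-y) = -((v - y)/K) := by ring
      linarith
    · rw [le_div_iff₀ hyv]; linarith
  exact ⟨le_of_tendsto hT (hev.mono fun y h => h.1),
    ge_of_tendsto hT (hev.mono fun y h => h.2)⟩

noncomputable def FI (f : ℝ → ℝ) : ℝ → ℝ := fun t => ∫ s in (0:ℝ)..t, f s

lemma FI_hasDeriv (hc : Continuous f) (t : ℝ) : HasDerivAt (FI f) (f t) t :=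
  intervalIntegral.integral_hasDerivAt_right (hc.intervalIntegrable _ _)
    (hc.stronglyMeasurableAtFilter _ _) hc.continuousAt

lemma FI_cont (hc : Continuous f) : Continuous (FI f) := by
  have : Differentiable ℝ (FI f) := fun t => (FI_hasDeriv hc t).differentiableAt
  exact this.continuous

lemma integral_eq_FI (hc : Continuous f) (u v : ℝ) :
    ∫ y in u..v, f y = FI f v - FI f u := by
  rw [eq_comm]
  exact intervalIntegral.integral_interval_sub_left (hc.intervalIntegrable 0 v)
    (hc.intervalIntegrable 0 u)

lemma avg_le_f0 (hK : 0 < K) (hf : Cond21 K f) {u b : ℝ} (h : u < b) :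
    (b - u)⁻¹ * (FI f b - FI f u) ≤ f 0 := by
  have hc := hl_cont hK hf
  have hub : (0:ℝ) < b - u := by linarith
  have hint : ∫ y in u..b, f y ≤ (b - u) * f 0 := by
    have := intervalIntegral.integral_mono_on (μ := volume) h.le (hc.intervalIntegrable u b)
      (intervalIntegrable_const) (fun t _ => hl_le_f0 hK hf t)
    rwa [intervalIntegral.integral_const, smul_eq_mul] at this
  rw [← integral_eq_FI hc]
  calc (b - u)⁻¹ * ∫ y in u..b, f y ≤ (b - u)⁻¹ * ((b - u) * f 0) := by
        apply mul_le_mul_of_nonneg_left hint (by positivity)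
    _ = f 0 := by field_simp

lemma maxFn_bddAbove (hK : 0 < K) (hf : Cond21 K f) (x : ℝ) :
    BddAbove {z : ℝ | ∃ a b : ℝ, a < x ∧ x < b ∧ z = (b - a)⁻¹ * ∫ y in a..b, f y} := by
  refine ⟨f 0, ?_⟩
  rintro z ⟨p, q, hp, hq, rfl⟩
  rw [integral_eq_FI (hl_cont hK hf)]
  exact avg_le_f0 hK hf (lt_trans hp hq)

lemma avg_le_max (hK : 0 < K) (hf : Cond21 K f) {u x b : ℝ} (h1 : u < x) (h2 : x < b) :
    (b - u)⁻¹ * (FI f b - FI f u) ≤ maxFn f x := by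
  apply le_csSup (maxFn_bddAbove hK hf x)
  exact ⟨u, b, h1, h2, by rw [integral_eq_FI (hl_cont hK hf)]⟩

lemma avgx_le_max (hK : 0 < K) (hf : Cond21 K f) {u x : ℝ} (h : u < x) :
    (x - u)⁻¹ * (FI f x - FI f u) ≤ maxFn f x := by
  have hc := hl_cont hK hf
  have hg : ContinuousAt (fun b => (b - u)⁻¹ * (FI f b - FI f u)) x := by
    exact (((continuousAt_id.sub continuousAt_const).inv₀
      (sub_ne_zero_of_ne h.ne')).mul
      (((FI_cont hc).continuousAt).sub continuousAt_const))
  have hT : Tendsto (fun b => (b - u)⁻¹ * (FI f b - FI f u)) (𝓝[>] x)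
      (𝓝 ((x - u)⁻¹ * (FI f x - FI f u))) := hg.tendsto.mono_left nhdsWithin_le_nhds
  refine le_of_tendsto hT ?_
  filter_upwards [self_mem_nhdsWithin] with b hb
  exact avg_le_max hK hf h hb

lemma f_le_max (hK : 0 < K) (hf : Cond21 K f) (x : ℝ) : f x ≤ maxFn f x := by
  have hc := hl_cont hK hf
  have hT : Tendsto (slope (FI f) x) (𝓝[<] x) (𝓝 (f x)) :=
    (hasDerivAt_iff_tendsto_slope.1 (FI_hasDeriv hc x)).mono_left
      (nhdsWithin_mono x (fun y hy => ne_of_lt hy))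
  refine le_of_tendsto hT ?_
  filter_upwards [self_mem_nhdsWithin] with u hu
  have hux : u < x := hu
  have hs : slope (FI f) x u = (x - u)⁻¹ * (FI f x - FI f u) := by
    rw [slope_def_field, show u - x = -(x - u) by ring,
      show FI f u - FI f x = -(FI f x - FI f u) by ring, neg_div_neg_eq, div_eq_inv_mul]
  rw [hs]
  exact avgx_le_max hK hf hux

lemma max_eq_avg (hK : 0 < K) (hf : Cond21 K f) {a : ℝ → ℝ} (ha : IsArgOf f a)
    {x : ℝ} (hx : x ≠ 0) : maxFn f x = (x - a x)⁻¹ * (FI f x - FI f (a x)) := by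
  rw [(ha x hx).2, integral_eq_FI (hl_cont hK hf)]

lemma foc (hK : 0 < K) (hf : Cond21 K f) {a : ℝ → ℝ} (ha : IsArgOf f a)
    {x : ℝ} (hx : 0 < x) : f (a x) = maxFn f x := by
  have hc := hl_cont hK hf
  have hax : a x < 0 := (ha x hx.ne').1.1 hx
  have haxx : a x < x := by linarith
  set P : ℝ → ℝ := fun u => (x - u)⁻¹ * (FI f x - FI f u) with hP
  have hloc : IsLocalMax P (a x) := by
    have hmem : Set.Iio x ∈ 𝓝 (a x) := Iio_mem_nhds haxx
    filter_upwards [hmem] with u hu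
    have h1 : P u ≤ maxFn f x := avgx_le_max hK hf hu
    exact le_trans h1 (le_of_eq (max_eq_avg hK hf ha hx.ne'))
  have hd1 : HasDerivAt (fun u => (x - u)⁻¹) (((x - a x)^2)⁻¹) (a x) := by
    have h1 : HasDerivAt (fun u : ℝ => x - u) (-1) (a x) := by
      simpa using (hasDerivAt_id (a x)).const_sub x
    have := h1.inv (by intro h'; linarith)
    rw [neg_neg, one_div] at this
    exact this
  have hd2 : HasDerivAt (fun u => FI f x - FI f u) (-(f (a x))) (a x) :=
    (FI_hasDeriv hc (a x)).const_sub (FI f x)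
  have hd : HasDerivAt P (((x - a x)^2)⁻¹ * (FI f x - FI f (a x)) +
      (x - (a x))⁻¹ * (-(f (a x)))) (a x) := hd1.mul hd2
  have hzero := hloc.hasDerivAt_eq_zero hd
  have hne : x - a x ≠ 0 := by intro h'; linarith
  rw [max_eq_avg hK hf ha hx.ne']
  field_simp at hzero ⊢
  nlinarith [hzero, sq_nonneg (x - a x)]

lemma hl_lip (hK : 0 < K) (hf : Cond21 K f) (x y : ℝ) : |f y - f x| ≤ K * |y - x| := by
  rcases lt_trichotomy x y with h | rfl | h
  · rw [abs_of_pos (by linarith : (0:ℝ) < y - x)]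
    exact hl_lip_aux hK hf h
  · simp
  · rw [abs_sub_comm (f y), abs_sub_comm y, abs_of_pos (by linarith : (0:ℝ) < x - y)]
    exact hl_lip_aux hK hf h

lemma hl_abs_f (hK : 0 < K) (hf : Cond21 K f) (t : ℝ) : |f t| ≤ |f 0| + K * |t| := by
  have := hl_lip hK hf 0 t
  calc |f t| = |f 0 + (f t - f 0)| := by ring_nf
    _ ≤ |f 0| + |f t - f 0| := abs_add_le _ _
    _ ≤ |f 0| + K * |t| := by simpa using add_le_add_left this |f 0|

lemma hl_inv_lip (hK : 0 < K) (hf : Cond21 K f) {u u' : ℝ} (hu : u < 0) (hu' : u' < 0) :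
    |u - u'| ≤ K * |f u - f u'| := by
  rcases lt_trichotomy u u' with h | rfl | h
  · have h1 := (hl_slope_neg hK hf h hu'.le).1
    rw [abs_sub_comm, abs_of_pos (by linarith : (0:ℝ) < u' - u),
      abs_sub_comm, abs_of_pos (by nlinarith [div_pos (by linarith : (0:ℝ) < u' - u) hK] :
        (0:ℝ) < f u' - f u)]
    rw [div_le_iff₀ hK] at h1
    linarith
  · simp
  · have h1 := (hl_slope_neg hK hf h hu.le).1
    rw [abs_of_pos (by linarith : (0:ℝ) < u - u'),
      abs_of_pos (by nlinarith [div_pos (by linarith : (0:ℝ) < u - u') hK] :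
        (0:ℝ) < f u - f u')]
    rw [div_le_iff₀ hK] at h1
    linarith

lemma a_bound (hK : 0 < K) (hf : Cond21 K f) {a : ℝ → ℝ} (ha : IsArgOf f a)
    {x : ℝ} (hx : 0 < x) : -(K^2 * x) ≤ a x := by
  have hax : a x < 0 := (ha x hx.ne').1.1 hx
  have h1 : f (a x) = maxFn f x := foc hK hf ha hx
  have h2 : f x ≤ maxFn f x := f_le_max hK hf x
  have h3 := (hl_slope_neg hK hf hax le_rfl).1
  have h4 := (hl_slope_pos hK hf le_rfl hx).2
  -- (0 - a x)/K ≤ f 0 - f (a x) ≤ f 0 - f x ≤ K * x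
  rw [div_le_iff₀ hK] at h3
  nlinarith [h3, h4, h1, h2]

lemma FI_bound (hK : 0 < K) (hf : Cond21 K f) {C1 : ℝ} {u v : ℝ}
    (hC : ∀ t ∈ Set.uIcc u v, |f t| ≤ C1) : |FI f v - FI f u| ≤ C1 * |v - u| := by
  rw [← integral_eq_FI (hl_cont hK hf)]
  have := intervalIntegral.norm_integral_le_of_norm_le_const (C := C1) (f := f) (a := u)
    (b := v) (fun t ht => by
      rw [Real.norm_eq_abs]; exact hC t (Set.Ioc_subset_Icc_self ht))
  simpa [Real.norm_eq_abs] using this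

lemma A_diff_bound (hK : 0 < K) (hf : Cond21 K f) {X C1 : ℝ} (hX : 0 < X)
    {u p q : ℝ} (hu : -(2*K^2*X) ≤ u) (hu0 : u < 0)
    (hp : p ∈ Set.Icc (X/2) (2*X)) (hq : q ∈ Set.Icc (X/2) (2*X))
    (hC1 : ∀ t ∈ Set.Icc (-(2*K^2*X)) (2*X), |f t| ≤ C1) :
    |(p - u)⁻¹ * (FI f p - FI f u) - (q - u)⁻¹ * (FI f q - FI f u)| ≤
      (4*C1/X) * |p - q| := by
  have hd1 : 0 < p - u := by linarith [hp.1, div_pos hX two_pos]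
  have hd2 : 0 < q - u := by linarith [hq.1, div_pos hX two_pos]
  have hsub : Set.Icc (-(2*K^2*X)) (2*X) ⊆ Set.Icc (-(2*K^2*X)) (2*X) := subset_rfl
  have hmem : ∀ t : ℝ, t ∈ Set.uIcc u p ∨ t ∈ Set.uIcc u q ∨ t ∈ Set.uIcc p q →
      t ∈ Set.Icc (-(2*K^2*X)) (2*X) := by
    intro t ht
    have h2X : X / 2 ≤ 2 * X := by linarith
    rcases ht with h | h | h
    · rcases Set.mem_uIcc.1 h with ⟨h1, h2⟩ | ⟨h1, h2⟩
      · exact ⟨le_trans hu h1, le_trans h2 hp.2⟩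
      · exact absurd (h1.trans h2) (by nlinarith [hp.1, hu0, hX])
    · rcases Set.mem_uIcc.1 h with ⟨h1, h2⟩ | ⟨h1, h2⟩
      · exact ⟨le_trans hu h1, le_trans h2 hq.2⟩
      · exact absurd (h1.trans h2) (by nlinarith [hq.1, hu0, hX])
    · rcases Set.mem_uIcc.1 h with ⟨h1, h2⟩ | ⟨h1, h2⟩
      · exact ⟨by nlinarith [hp.1, h1, hX], le_trans h2 hq.2⟩
      · exact ⟨by nlinarith [hq.1, h1, hX], le_trans h2 hp.2⟩
  have hC1nn : 0 ≤ C1 := le_trans (abs_nonneg _) (hC1 0 ⟨by nlinarith, by nlinarith⟩)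
  have hb1 : |FI f p - FI f q| ≤ C1 * |p - q| :=
    FI_bound hK hf (fun t ht => hC1 t (hmem t (Or.inr (Or.inr (by rwa [Set.uIcc_comm])))))
  have hb2 : |FI f q - FI f u| ≤ C1 * (q - u) := by
    have := FI_bound hK hf (fun t ht => hC1 t (hmem t (Or.inr (Or.inl ht))))
    rwa [abs_of_pos hd2] at this
  have heq : (p - u)⁻¹ * (FI f p - FI f u) - (q - u)⁻¹ * (FI f q - FI f u) =
      ((FI f p - FI f q) * (q - u) + (FI f q - FI f u) * (q - p)) / ((p - u) * (q - u)) := by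
    field_simp
    ring
  rw [heq, abs_div, abs_of_pos (mul_pos hd1 hd2)]
  have hnum : |(FI f p - FI f q) * (q - u) + (FI f q - FI f u) * (q - p)| ≤
      2 * C1 * (q - u) * |p - q| := by
    calc |(FI f p - FI f q) * (q - u) + (FI f q - FI f u) * (q - p)|
        ≤ |(FI f p - FI f q) * (q - u)| + |(FI f q - FI f u) * (q - p)| := abs_add_le _ _
      _ = |FI f p - FI f q| * (q - u) + |FI f q - FI f u| * |q - p| := by
          rw [abs_mul, abs_mul, abs_of_pos hd2]
      _ ≤ (C1 * |p - q|) * (q - u) + (C1 * (q - u)) * |p - q| := by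
          apply add_le_add
          · exact mul_le_mul_of_nonneg_right hb1 hd2.le
          · rw [abs_sub_comm q p]; exact mul_le_mul_of_nonneg_right hb2 (abs_nonneg _)
      _ = 2 * C1 * (q - u) * |p - q| := by ring
  calc |(FI f p - FI f q) * (q - u) + (FI f q - FI f u) * (q - p)| / ((p - u) * (q - u))
      ≤ (2 * C1 * (q - u) * |p - q|) / ((p - u) * (q - u)) := by gcongr
    _ = (2 * C1 / (p - u)) * |p - q| := by field_simp
    _ ≤ (4*C1/X) * |p - q| := by
        apply mul_le_mul_of_nonneg_right _ (abs_nonneg _)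
        rw [div_le_div_iff₀ hd1 hX]
        nlinarith [hp.1, hu0, hC1nn]

lemma max_lip (hK : 0 < K) (hf : Cond21 K f) {a : ℝ → ℝ} (ha : IsArgOf f a)
    {X : ℝ} (hX : 0 < X) :
    ∀ x ∈ Set.Icc (X/2) (2*X), ∀ x' ∈ Set.Icc (X/2) (2*X),
      |maxFn f x - maxFn f x'| ≤ (4*(|f 0| + K*(2*K^2*X + 2*X))/X) * |x - x'| := by
  set C1 : ℝ := |f 0| + K*(2*K^2*X + 2*X) with hC1def
  have hC1 : ∀ t ∈ Set.Icc (-(2*K^2*X)) (2*X), |f t| ≤ C1 := by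
    intro t ht
    have h1 := hl_abs_f hK hf t
    have h2 : |t| ≤ 2*K^2*X + 2*X := by
      rw [abs_le]; constructor
      · nlinarith [ht.1, hX, sq_nonneg K]
      · nlinarith [ht.2, hX, sq_nonneg K]
    nlinarith [h1, h2, hK]
  have core : ∀ x ∈ Set.Icc (X/2) (2*X), ∀ x' ∈ Set.Icc (X/2) (2*X),
      maxFn f x - maxFn f x' ≤ (4*C1/X) * |x - x'| := by
    intro x hx x' hx'
    have hx0 : 0 < x := lt_of_lt_of_le (by linarith) hx.1
    have hx'0 : 0 < x' := lt_of_lt_of_le (by linarith) hx'.1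
    have hu0 : a x < 0 := (ha x hx0.ne').1.1 hx0
    have hau : -(2*K^2*X) ≤ a x := by
      have := a_bound hK hf ha hx0
      nlinarith [hx.2, sq_nonneg K]
    have h1 : maxFn f x = (x - a x)⁻¹ * (FI f x - FI f (a x)) := max_eq_avg hK hf ha hx0.ne'
    have h2 : (x' - a x)⁻¹ * (FI f x' - FI f (a x)) ≤ maxFn f x' :=
      avgx_le_max hK hf (by linarith : a x < x')
    have h3 := A_diff_bound hK hf hX hau hu0 hx hx' hC1
    have h4 := abs_le.1 h3
    linarith [h4.2]
  intro x hx x' hx'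
  have h1 := core x hx x' hx'
  have h2 := core x' hx' x hx
  rw [abs_sub_comm x' x] at h2
  exact abs_sub_le_iff.2 ⟨h1, h2⟩

lemma max_contAt (hK : 0 < K) (hf : Cond21 K f) {a : ℝ → ℝ} (ha : IsArgOf f a)
    {X : ℝ} (hX : 0 < X) : ContinuousAt (maxFn f) X := by
  apply continuousAt_of_locally_lipschitz (show (0:ℝ) < X/2 by linarith)
    (4*(|f 0| + K*(2*K^2*X + 2*X))/X)
  intro y hy
  rw [Real.dist_eq] at hy ⊢
  rw [Real.dist_eq]
  have hy' : y ∈ Set.Icc (X/2) (2*X) := by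
    rw [abs_lt] at hy; constructor <;> [linarith [hy.1]; linarith [hy.2]]
  exact max_lip hK hf ha hX y hy' X ⟨by linarith, by linarith⟩

lemma a_contAt (hK : 0 < K) (hf : Cond21 K f) {a : ℝ → ℝ} (ha : IsArgOf f a)
    {X : ℝ} (hX : 0 < X) : ContinuousAt a X := by
  apply continuousAt_of_locally_lipschitz (show (0:ℝ) < X/2 by linarith)
    (K * (4*(|f 0| + K*(2*K^2*X + 2*X))/X))
  intro y hy
  rw [Real.dist_eq] at hy ⊢
  rw [Real.dist_eq]
  have hy0 : 0 < y := by rw [abs_lt] at hy; linarith [hy.1]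
  have hy' : y ∈ Set.Icc (X/2) (2*X) := by
    rw [abs_lt] at hy; constructor <;> [linarith [hy.1]; linarith [hy.2]]
  have h1 : |a y - a X| ≤ K * |f (a y) - f (a X)| :=
    hl_inv_lip hK hf ((ha y hy0.ne').1.1 hy0) ((ha X hX.ne').1.1 hX)
  rw [foc hK hf ha hy0, foc hK hf ha hX] at h1
  have h2 := max_lip hK hf ha hX y hy' X ⟨by linarith, by linarith⟩
  calc |a y - a X| ≤ K * |maxFn f y - maxFn f X| := h1
    _ ≤ K * ((4*(|f 0| + K*(2*K^2*X + 2*X))/X) * |y - X|) :=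
        mul_le_mul_of_nonneg_left h2 hK.le
    _ = K * (4*(|f 0| + K*(2*K^2*X + 2*X))/X) * |y - X| := by ring

noncomputable def GG (f : ℝ → ℝ) (u v : ℝ) : ℝ :=
  (v - u)⁻¹ * f v - ((v - u)^2)⁻¹ * (FI f v - FI f u)

lemma A_hasDeriv (hc : Continuous f) {u v : ℝ} (h : u < v) :
    HasDerivAt (fun w => (w - u)⁻¹ * (FI f w - FI f u)) (GG f u v) v := by
  have h1 : HasDerivAt (fun w : ℝ => (w - u)⁻¹) (-(((v - u)^2)⁻¹)) v := by
    have := ((hasDerivAt_id v).sub_const u).inv (sub_ne_zero_of_ne h.ne')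
    rw [neg_div, one_div] at this
    exact this
  have h2 : HasDerivAt (fun w => FI f w - FI f u) (f v) v := (FI_hasDeriv hc v).sub_const _
  have h3 := h1.mul h2
  have e : GG f u v = -(((v - u)^2)⁻¹) * (FI f v - FI f u) + (v - u)⁻¹ * f v := by
    unfold GG; ring
  rw [e]; exact h3

lemma mvtA (hc : Continuous f) {u p q : ℝ} (hu : u < p) (hpq : p < q) :
    ∃ ξ ∈ Set.Ioo p q,
      GG f u ξ = ((q - u)⁻¹ * (FI f q - FI f u) - (p - u)⁻¹ * (FI f p - FI f u)) / (q - p) := by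
  apply exists_hasDerivAt_eq_slope (fun w => (w - u)⁻¹ * (FI f w - FI f u)) (fun w => GG f u w) hpq
  · intro w hw
    exact (A_hasDeriv hc (lt_of_lt_of_le hu hw.1)).continuousAt.continuousWithinAt
  · intro w hw
    exact A_hasDeriv hc (lt_trans hu hw.1)

lemma GG_contAt (hc : Continuous f) {u v : ℝ} (h : u < v) :
    ContinuousAt (fun pr : ℝ × ℝ => GG f pr.1 pr.2) (u, v) := by
  have hne : v - u ≠ 0 := sub_ne_zero_of_ne h.ne'
  apply ContinuousAt.sub
  · exact ((continuousAt_snd.sub continuousAt_fst).inv₀ hne).mul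
      (hc.continuousAt.comp continuousAt_snd)
  · exact (((continuousAt_snd.sub continuousAt_fst).pow 2).inv₀ (pow_ne_zero _ hne)).mul
      (((FI_cont hc).continuousAt.comp continuousAt_snd).sub
        ((FI_cont hc).continuousAt.comp continuousAt_fst))

lemma m_eq_GG (hK : 0 < K) (hf : Cond21 K f) {a : ℝ → ℝ} (ha : IsArgOf f a)
    {x : ℝ} (hx : 0 < x) : (f x - maxFn f x) / (x - a x) = GG f (a x) x := by
  have hax : a x < 0 := (ha x hx.ne').1.1 hx
  have hne : x - a x ≠ 0 := by intro h'; linarith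
  rw [max_eq_avg hK hf ha hx.ne']
  unfold GG
  field_simp

lemma max_hasDeriv (hK : 0 < K) (hf : Cond21 K f) {a : ℝ → ℝ} (ha : IsArgOf f a)
    {X : ℝ} (hX : 0 < X) :
    HasDerivAt (maxFn f) ((f X - maxFn f X) / (X - a X)) X := by
  have hc := hl_cont hK hf
  set m := (f X - maxFn f X) / (X - a X) with hm
  have hu0 : a X < 0 := (ha X hX.ne').1.1 hX
  rw [hasDerivAt_iff_tendsto_slope]
  rw [Metric.tendsto_nhdsWithin_nhds]
  intro ε hε
  obtain ⟨δ₀, hδ₀, hG⟩ := Metric.continuousAt_iff.1 (GG_contAt hc (show a X < X by linarith)) ε hε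
  obtain ⟨δ₁, hδ₁, haδ⟩ := Metric.continuousAt_iff.1 (a_contAt hK hf ha hX) δ₀ hδ₀
  refine ⟨min (min δ₀ δ₁) (X/2), by positivity, ?_⟩
  intro x hxne hxd
  have hxX : x ≠ X := hxne
  have hd0 : |x - X| < δ₀ := lt_of_lt_of_le (by rwa [Real.dist_eq] at hxd)
    (le_trans (min_le_left _ _) (min_le_left _ _))
  have hd1 : |x - X| < δ₁ := lt_of_lt_of_le (by rwa [Real.dist_eq] at hxd)
    (le_trans (min_le_left _ _) (min_le_right _ _))
  have hd2 : |x - X| < X/2 := lt_of_lt_of_le (by rwa [Real.dist_eq] at hxd) (min_le_right _ _)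
  have hx0 : 0 < x := by rw [abs_lt] at hd2; linarith [hd2.1]
  have hax : a x < 0 := (ha x hx0.ne').1.1 hx0
  have haxδ : |a x - a X| < δ₀ := by
    have := haδ (show dist x X < δ₁ by rwa [Real.dist_eq])
    rwa [Real.dist_eq] at this
  -- key: any G-value at nearby points is ε-close to m
  have hGb : ∀ u ξ : ℝ, |u - a X| < δ₀ → |ξ - X| < δ₀ → |GG f u ξ - m| < ε := by
    intro u ξ h1 h2
    have hd : dist ((u, ξ) : ℝ × ℝ) ((a X, X) : ℝ × ℝ) < δ₀ := by
      rw [Prod.dist_eq]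
      exact max_lt (by rwa [Real.dist_eq]) (by rwa [Real.dist_eq])
    have := hG hd
    have he : GG f (a X) X = m := (m_eq_GG hK hf ha hX).symm
    rw [Real.dist_eq] at this
    simp only [] at this
    rw [he] at this
    exact this
  rw [Real.dist_eq, slope_def_field]
  -- envelope inequalities
  have EqX : maxFn f X = (X - a X)⁻¹ * (FI f X - FI f (a X)) := max_eq_avg hK hf ha hX.ne'
  have Eqx : maxFn f x = (x - a x)⁻¹ * (FI f x - FI f (a x)) := max_eq_avg hK hf ha hx0.ne'
  rcases lt_or_gt_of_ne hxX with hlt | hgt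
  · -- x < X
    obtain ⟨ξ₁, hξ₁, e₁⟩ := mvtA hc (show a X < x by linarith) hlt
    obtain ⟨ξ₂, hξ₂, e₂⟩ := mvtA hc (show a x < x by linarith) hlt
    have hξ₁d : |ξ₁ - X| < δ₀ := by
      rw [abs_lt] at hd0 ⊢; obtain ⟨l, r⟩ := hξ₁; constructor <;> [linarith [hd0.1]; linarith]
    have hξ₂d : |ξ₂ - X| < δ₀ := by
      rw [abs_lt] at hd0 ⊢; obtain ⟨l, r⟩ := hξ₂; constructor <;> [linarith [hd0.1]; linarith]
    have b₁ := hGb (a X) ξ₁ (by simpa using hδ₀) hξ₁d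
    have b₂ := hGb (a x) ξ₂ haxδ hξ₂d
    have low : maxFn f x ≥ (x - a X)⁻¹ * (FI f x - FI f (a X)) :=
      avgx_le_max hK hf (by linarith)
    have up : maxFn f X ≥ (X - a x)⁻¹ * (FI f X - FI f (a x)) :=
      avgx_le_max hK hf (by linarith)
    -- slope' = (Mf X - Mf x)/(X - x) and slope = (Mf x - Mf X)/(x - X) are equal
    have hsl : (maxFn f x - maxFn f X) / (x - X) = (maxFn f X - maxFn f x) / (X - x) := by
      rw [div_eq_div_iff (by intro h'; exact hxX (by linarith)) (by intro h'; exact hxX (by linarith))]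
      ring
    rw [hsl]
    have hXx : 0 < X - x := by linarith
    have lowb : (maxFn f X - maxFn f x) / (X - x) ≤ GG f (a X) ξ₁ := by
      rw [e₁]
      apply div_le_div_of_nonneg_right _ hXx.le
      linarith [low, EqX.le, EqX.ge]
    have upb : GG f (a x) ξ₂ ≤ (maxFn f X - maxFn f x) / (X - x) := by
      rw [e₂]
      apply div_le_div_of_nonneg_right _ hXx.le
      linarith [up, Eqx.le, Eqx.ge]
    have hb₁ := abs_lt.1 b₁
    have hb₂ := abs_lt.1 b₂
    rw [abs_lt]
    constructor <;> [linarith [hb₂.1, upb]; linarith [hb₁.2, lowb]]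
  · -- X < x
    obtain ⟨ξ₁, hξ₁, e₁⟩ := mvtA hc (show a X < X by linarith) hgt
    obtain ⟨ξ₂, hξ₂, e₂⟩ := mvtA hc (show a x < X by linarith) hgt
    have hξ₁d : |ξ₁ - X| < δ₀ := by
      rw [abs_lt] at hd0 ⊢; obtain ⟨l, r⟩ := hξ₁; constructor <;> [linarith; linarith [hd0.2]]
    have hξ₂d : |ξ₂ - X| < δ₀ := by
      rw [abs_lt] at hd0 ⊢; obtain ⟨l, r⟩ := hξ₂; constructor <;> [linarith; linarith [hd0.2]]
    have b₁ := hGb (a X) ξ₁ (by simpa using hδ₀) hξ₁d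
    have b₂ := hGb (a x) ξ₂ haxδ hξ₂d
    have low : maxFn f x ≥ (x - a X)⁻¹ * (FI f x - FI f (a X)) :=
      avgx_le_max hK hf (by linarith)
    have up : maxFn f X ≥ (X - a x)⁻¹ * (FI f X - FI f (a x)) :=
      avgx_le_max hK hf (by linarith)
    have hxX' : 0 < x - X := by linarith
    have lowb : GG f (a X) ξ₁ ≤ (maxFn f x - maxFn f X) / (x - X) := by
      rw [e₁]
      apply div_le_div_of_nonneg_right _ hxX'.le
      linarith [low, EqX.le, EqX.ge]
    have upb : (maxFn f x - maxFn f X) / (x - X) ≤ GG f (a x) ξ₂ := by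
      rw [e₂]
      apply div_le_div_of_nonneg_right _ hxX'.le
      linarith [up, Eqx.le, Eqx.ge]
    have hb₁ := abs_lt.1 b₁
    have hb₂ := abs_lt.1 b₂
    rw [abs_lt]
    constructor <;> [linarith [hb₁.1, lowb]; linarith [hb₂.2, upb]]

lemma hl_strict (hK : 0 < K) (hf : Cond21 K f) {u u' : ℝ} (h : u < u') (h' : u' ≤ 0) :
    f u < f u' := by
  have h1 := (hl_slope_neg hK hf h h').1
  have := div_pos (by linarith : (0:ℝ) < u' - u) hK
  linarith

lemma hl_injOn (hK : 0 < K) (hf : Cond21 K f) {u u' : ℝ} (hu : u < 0) (hu' : u' < 0)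
    (h : f u = f u') : u = u' := by
  rcases lt_trichotomy u u' with hl | he | hl
  · exact absurd h (ne_of_lt (hl_strict hK hf hl hu'.le))
  · exact he
  · exact absurd h.symm (ne_of_lt (hl_strict hK hf hl hu.le))

lemma a_hasDeriv (hK : 0 < K) (hf : Cond21 K f) (hdiff : TwiceDiffOffZero f)
    {a : ℝ → ℝ} (ha : IsArgOf f a) {X : ℝ} (hX : 0 < X) :
    HasDerivAt a ((deriv f (a X))⁻¹ * ((f X - maxFn f X) / (X - a X))) X := by
  have hc := hl_cont hK hf
  have hu0 : a X < 0 := (ha X hX.ne').1.1 hX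
  have hdb : DifferentiableAt ℝ f (a X) := (hdiff (a X) hu0.ne).1
  set b := deriv f (a X) with hbdef
  have hbK := hl_deriv_neg hK hf hu0 hdb
  have hbpos : 0 < b := lt_of_lt_of_le (by positivity) hbK.1
  set L := 2 * a X with hLdef
  have hL : L < a X := by rw [hLdef]; linarith
  have hfL : f L < f (a X) := hl_strict hK hf hL hu0.le
  have hf0 : f (a X) < f 0 := hl_strict hK hf hu0 le_rfl
  set g := Function.invFunOn f (Set.Iio (0:ℝ)) with hgdef
  have hexists : ∀ y ∈ Set.Ioo (f L) (f 0), ∃ u ∈ Set.Iio (0:ℝ), f u = y := by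
    intro y hy
    have := intermediate_value_Ioo (by linarith : L ≤ 0) hc.continuousOn hy
    obtain ⟨u, hu, hfu⟩ := this
    exact ⟨u, hu.2, hfu⟩
  have hgmem : ∀ y ∈ Set.Ioo (f L) (f 0), g y ∈ Set.Iio (0:ℝ) :=
    fun y hy => Function.invFunOn_mem (hexists y hy)
  have hgeq : ∀ y ∈ Set.Ioo (f L) (f 0), f (g y) = y :=
    fun y hy => Function.invFunOn_eq (hexists y hy)
  have hga : ∀ x' : ℝ, 0 < x' → g (f (a x')) = a x' := by
    intro x' hx'
    have hax' : a x' < 0 := (ha x' hx'.ne').1.1 hx'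
    have hex : ∃ u ∈ Set.Iio (0:ℝ), f u = f (a x') := ⟨a x', hax', rfl⟩
    exact hl_injOn hK hf (Function.invFunOn_mem hex) hax' (Function.invFunOn_eq hex)
  have hy₀ : f (a X) ∈ Set.Ioo (f L) (f 0) := ⟨hfL, hf0⟩
  have hcontg : ContinuousAt g (f (a X)) := by
    apply continuousAt_of_locally_lipschitz
      (show (0:ℝ) < min (f (a X) - f L) (f 0 - f (a X)) by
        apply lt_min <;> linarith) K
    intro y hy
    rw [Real.dist_eq] at hy ⊢
    rw [Real.dist_eq]
    have hyIoo : y ∈ Set.Ioo (f L) (f 0) := by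
      rw [abs_lt] at hy
      constructor
      · have := hy.1; have := min_le_left (f (a X) - f L) (f 0 - f (a X)); linarith
      · have := hy.2; have := min_le_right (f (a X) - f L) (f 0 - f (a X)); linarith
    have h1 := hl_inv_lip hK hf (hgmem y hyIoo) (hgmem _ hy₀)
    rwa [hgeq y hyIoo, hgeq _ hy₀] at h1
  have hfg : ∀ᶠ y in 𝓝 (f (a X)), f (g y) = y := by
    filter_upwards [Ioo_mem_nhds hfL hf0] with y hy
    exact hgeq y hy
  have hfd : HasDerivAt f b (g (f (a X))) := by
    rw [hga X hX]
    exact hdb.hasDerivAt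
  have hg' : HasDerivAt g b⁻¹ (f (a X)) :=
    HasDerivAt.of_local_left_inverse hcontg hfd (ne_of_gt hbpos) hfg
  have hg'' : HasDerivAt g b⁻¹ (maxFn f X) := by rwa [foc hK hf ha hX] at hg'
  have hcomp : HasDerivAt (g ∘ maxFn f) (b⁻¹ * ((f X - maxFn f X) / (X - a X))) X :=
    hg''.comp X (max_hasDeriv hK hf ha hX)
  apply hcomp.congr_of_eventuallyEq
  filter_upwards [Ioi_mem_nhds hX] with x' hx'
  have : g (maxFn f x') = a x' := by rw [← foc hK hf ha hx']; exact hga x' hx'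
  simp only [Function.comp_apply]
  rw [this]

lemma crit (hK : 0 < K) (hf : Cond21 K f) (hdiff : TwiceDiffOffZero f)
    {a : ℝ → ℝ} (ha : IsArgOf f a) {x : ℝ} (hx : 0 < x)
    (hz : deriv (deriv (maxFn f)) x = 0) :
    deriv f x * deriv f (a x) =
      2 * deriv (maxFn f) x * deriv f (a x) - (deriv (maxFn f) x)^2 ∧
    deriv (maxFn f) x ≤ 0 ∧ 1/K ≤ deriv f (a x) ∧ deriv f (a x) ≤ K ∧
    deriv a x = (deriv f (a x))⁻¹ * deriv (maxFn f) x := by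
  have hc := hl_cont hK hf
  have hax : a x < 0 := (ha x hx.ne').1.1 hx
  have hs : (0:ℝ) < x - a x := by linarith
  have hsne : x - a x ≠ 0 := ne_of_gt hs
  have hMd := max_hasDeriv hK hf ha hx
  have hm : deriv (maxFn f) x = (f x - maxFn f x) / (x - a x) := hMd.deriv
  set m := (f x - maxFn f x) / (x - a x) with hmdef
  have hbb := hl_deriv_neg hK hf hax (hdiff (a x) hax.ne).1
  set b := deriv f (a x) with hbdef
  have hbpos : 0 < b := lt_of_lt_of_le (by positivity) hbb.1
  have hbne : b ≠ 0 := ne_of_gt hbpos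
  have had := a_hasDeriv hK hf hdiff ha hx
  have hα : deriv a x = b⁻¹ * m := had.deriv
  have hm0 : m ≤ 0 := by
    apply div_nonpos_of_nonpos_of_nonneg _ hs.le
    linarith [f_le_max hK hf x]
  set c := deriv f x with hcdef
  have hev : deriv (maxFn f) =ᶠ[𝓝 x] (fun y => (f y - maxFn f y) / (y - a y)) := by
    filter_upwards [Ioi_mem_nhds hx] with y hy
    exact (max_hasDeriv hK hf ha hy).deriv
  have hnum : HasDerivAt (fun y => f y - maxFn f y) (c - m) x :=
    ((hdiff x hx.ne').1.hasDerivAt).sub hMd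
  have hden : HasDerivAt (fun y => y - a y) (1 - b⁻¹ * m) x := by
    have := (hasDerivAt_id x).sub had
    exact this
  have hφ : HasDerivAt (fun y => (f y - maxFn f y) / (y - a y))
      (((c - m) * (x - a x) - (f x - maxFn f x) * (1 - b⁻¹ * m)) / (x - a x)^2) x :=
    hnum.div hden hsne
  have hE : deriv (deriv (maxFn f)) x =
      ((c - m) * (x - a x) - (f x - maxFn f x) * (1 - b⁻¹ * m)) / (x - a x)^2 := by
    rw [hev.deriv_eq]
    exact hφ.deriv
  rw [hE] at hz
  have hnum0 : (c - m) * (x - a x) - (f x - maxFn f x) * (1 - b⁻¹ * m) = 0 := by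
    rcases div_eq_zero_iff.1 hz with h | h
    · exact h
    · exact absurd h (pow_ne_zero _ hsne)
  have hfm : f x - maxFn f x = m * (x - a x) := by
    rw [hmdef]; field_simp
  rw [hfm] at hnum0
  refine ⟨?_, by rw [hm]; exact hm0, hbb.1, hbb.2, by rw [hm]; exact hα⟩
  rw [hm]
  have h1 : (c - m - m * (1 - b⁻¹ * m)) * (x - a x) = 0 := by linear_combination hnum0
  have h2 : c - m - m * (1 - b⁻¹ * m) = 0 := by
    rcases mul_eq_zero.1 h1 with h | h
    · exact h
    · exact absurd h hsne
  have hbinv : b * b⁻¹ = 1 := mul_inv_cancel₀ hbne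
  linear_combination b * h2 - m^2 * hbinv

lemma alg {D b0 b1 m0 m1 c0 c1 : ℝ} (hD : 0 < D) (hb0 : 0 < b0) (hb1 : 0 < b1)
    (hm0 : m0 ≤ 0) (hm1 : m1 ≤ 0) (hd0 : -m0 ≤ D * b0) (hd1 : -m1 ≤ D * b1)
    (r0 : c0 * b0 = 2*m0*b0 - m0^2) (r1 : c1 * b1 = 2*m1*b1 - m1^2) :
    |m0 - m1| ≤ 2*(2+D)^2 * (|c1 - c0| + |b1 - b0|) := by
  have key : |m0 - m1| ≤ |c0 - c1| / 2 + D * |b1 - b0| := by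
    have hk1 : b1 * (-m1) ≤ 2*b0*b1 - b1*(m0+m1) := by nlinarith
    have hk2 : 2*(b0*b1) ≤ 2*b0*b1 - b1*(m0+m1) := by nlinarith
    have hkpos : 0 < 2*b0*b1 - b1*(m0+m1) := by nlinarith [mul_pos hb0 hb1]
    have hident : (m0 - m1) * (2*b0*b1 - b1*(m0+m1)) =
        (c0-c1)*(b0*b1) + m1^2 * (b1 - b0) := by
      linear_combination b0 * r1 - b1 * r0
    have habs : |m0 - m1| * (2*b0*b1 - b1*(m0+m1)) ≤
        |c0 - c1| * (b0 * b1) + m1^2 * |b1 - b0| := by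
      rw [← abs_of_pos hkpos, ← abs_mul]
      rw [abs_le]
      constructor
      · rw [hident]
        nlinarith [neg_abs_le (c0-c1), neg_abs_le (b1-b0), mul_pos hb0 hb1,
          sq_nonneg m1, le_abs_self (b1-b0), le_abs_self (c0-c1)]
      · rw [hident]
        nlinarith [neg_abs_le (c0-c1), neg_abs_le (b1-b0), mul_pos hb0 hb1,
          sq_nonneg m1, le_abs_self (b1-b0), le_abs_self (c0-c1)]
    have hm1sq : m1^2 ≤ D * (2*b0*b1 - b1*(m0+m1)) := by nlinarith
    have hfin : |m0 - m1| * (2*b0*b1 - b1*(m0+m1)) ≤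
        (|c0 - c1| / 2 + D * |b1 - b0|) * (2*b0*b1 - b1*(m0+m1)) := by
      have h2 : |c0 - c1| * (b0 * b1) ≤ |c0 - c1| / 2 * (2*b0*b1 - b1*(m0+m1)) := by
        nlinarith [abs_nonneg (c0-c1), hk2]
      have h3 : m1^2 * |b1 - b0| ≤ (D * |b1 - b0|) * (2*b0*b1 - b1*(m0+m1)) := by
        nlinarith [abs_nonneg (b1-b0), hm1sq]
      nlinarith [habs]
    exact le_of_mul_le_mul_right hfin hkpos
  have hcc : |c0 - c1| = |c1 - c0| := abs_sub_comm _ _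
  rw [hcc] at key
  nlinarith [key, abs_nonneg (c1 - c0), abs_nonneg (b1 - b0),
    mul_nonneg hD.le (abs_nonneg (b1 - b0)), mul_nonneg hD.le (abs_nonneg (c1 - c0)),
    mul_nonneg (mul_nonneg hD.le hD.le) (abs_nonneg (b1 - b0)),
    mul_nonneg (mul_nonneg hD.le hD.le) (abs_nonneg (c1 - c0))]


end HLAux

/-- Under condition (2.1) with `f` twice differentiable off `0`: if `0 < x₀ < x₁`,
`(M f)''(x᎔) = 0` and `−a'(x᎔) ≤ D` for `i = 0,1`, then
`|(M f)'(x₀) − (M f)'(x₁)| ≤ 2(2+D)²(|f'(x₁) − f'(x₀)| + |f'(a(x₁)) − f'(a(x₀))|)`. -/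
theorem statement9 (K : ℝ) (hK : 0 < K) (f : ℝ → ℝ) (hf : Cond21 K f)
    (hdiff : TwiceDiffOffZero f) (a : ℝ → ℝ) (ha : IsArgOf f a)
    (D x0 x1 : ℝ) (hD : 0 < D) (h0 : 0 < x0) (h01 : x0 < x1)
    (hz0 : deriv (deriv (maxFn f)) x0 = 0) (hz1 : deriv (deriv (maxFn f)) x1 = 0)
    (ha0 : -deriv a x0 ≤ D) (ha1 : -deriv a x1 ≤ D) :
    |deriv (maxFn f) x0 - deriv (maxFn f) x1| ≤
      2 * (2 + D) ^ 2 *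
        (|deriv f x1 - deriv f x0| + |deriv f (a x1) - deriv f (a x0)|) := by
  have h1 : 0 < x1 := lt_trans h0 h01
  obtain ⟨r0, hm0, hbK0, hbK0', hα0⟩ := crit hK hf hdiff ha h0 hz0
  obtain ⟨r1, hm1, hbK1, hbK1', hα1⟩ := crit hK hf hdiff ha h1 hz1
  set m0 := deriv (maxFn f) x0
  set m1 := deriv (maxFn f) x1
  set b0 := deriv f (a x0)
  set b1 := deriv f (a x1)
  set c0 := deriv f x0
  set c1 := deriv f x1
  have hb0 : 0 < b0 := lt_of_lt_of_le (by positivity) hbK0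
  have hb1 : 0 < b1 := lt_of_lt_of_le (by positivity) hbK1
  have hd0 : -m0 ≤ D * b0 := by
    rw [hα0] at ha0
    have he : -(b0⁻¹ * m0) * b0 = -m0 := by field_simp
    nlinarith [mul_le_mul_of_nonneg_right ha0 hb0.le]
  have hd1 : -m1 ≤ D * b1 := by
    rw [hα1] at ha1
    have he : -(b1⁻¹ * m1) * b1 = -m1 := by field_simp
    nlinarith [mul_le_mul_of_nonneg_right ha1 hb1.le]
  exact alg hD hb0 hb1 hm0 hm1 hd0 hd1 r0 r1
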